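/- For any oriented linear chord diagrams C of d chords and D of e chords with ⟨C⟩ ≠ 0 and ⟨D⟩ ≠ 0, one has span ⟨C♯D⟩ = span ⟨C⟩ + span ⟨D⟩. -/

import Mathlib

open Equiv LaurentPolynomial Finset

/-- `C` is an oriented linear chord diagram of `d` chords: a set of `d` ordered pairs of
integers whose entries (first and second components together) are exactly `{1, …, 2d}`.
(Together with `C.card = d` this forces all `2d` entries to be pairwise distinct.) -/
def IsOLCD (d : ℕ) (C : Finset (ℤ × ℤ)) : Prop :=
  C.card = d ∧ (C.image Prod.fst ∪ C.image Prod.snd) = Finset.Icc 1 (2 * (d : ℤ))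

/-- The set `R_c` of transpositions of `ℤ` associated to a chord `c = (i, j)` carrying the
label `lbl` (`true` = `A`, `false` = `B`). -/
def Rset (lbl : Bool) (c : ℤ × ℤ) : Set (Equiv.Perm ℤ) :=
  if lbl = decide (c.1 < c.2) then
    {Equiv.swap c.1 (c.2 - 1), Equiv.swap (c.1 - 1) c.2}
  else
    {Equiv.swap c.1 c.2, Equiv.swap (c.1 - 1) (c.2 - 1)}

/-- The subgroup of permutations generated by `⋃_{c ∈ C} R_c`, for a state `s` of `C`. -/
def stateGroup (C : Finset (ℤ × ℤ)) (s : {c // c ∈ C} → Bool) : Subgroup (Equiv.Perm ℤ) :=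
  Subgroup.closure (⋃ c : {c // c ∈ C}, Rset (s c) c.1)

/-- `Γ_s`: the number of orbits of the action of `stateGroup C s` on `{0, 1, …, 2d}`,
counted as the number of distinct orbits of elements of `{0, …, 2d}`. -/
noncomputable def Gamma (d : ℕ) (C : Finset (ℤ × ℤ)) (s : {c // c ∈ C} → Bool) : ℕ :=
  ((fun x : ℤ => MulAction.orbit (stateGroup C s) x) '' Set.Icc (0 : ℤ) (2 * d)).ncard

/-- `⟨C|s⟩ = A^(|s⁻¹(A)| - |s⁻¹(B)|) * (-A² - A⁻²)^(Γ_s - 1)`. -/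
noncomputable def bracketTerm (d : ℕ) (C : Finset (ℤ × ℤ)) (s : {c // c ∈ C} → Bool) :
    LaurentPolynomial ℤ :=
  T (((Finset.univ.filter fun c => s c = true).card : ℤ) -
      ((Finset.univ.filter fun c => s c = false).card : ℤ)) *
    (-T 2 - T (-2)) ^ (Gamma d C s - 1)

/-- The bracket polynomial `⟨C⟩ = Σ_s ⟨C|s⟩`, summing over all `2^d` states of `C`. -/
noncomputable def bracket (d : ℕ) (C : Finset (ℤ × ℤ)) : LaurentPolynomial ℤ :=
  ∑ s : ({c // c ∈ C} → Bool), bracketTerm d C s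

/-- The maximal exponent occurring in a Laurent polynomial (junk value `0` for `f = 0`). -/
noncomputable def maxDeg (f : LaurentPolynomial ℤ) : ℤ := f.coeff.support.max.unbotD 0

/-- The minimal exponent occurring in a Laurent polynomial (junk value `0` for `f = 0`). -/
noncomputable def minDeg (f : LaurentPolynomial ℤ) : ℤ := f.coeff.support.min.untopD 0

/-- The span of a Laurent polynomial: maximal minus minimal exponent. -/
noncomputable def spanL (f : LaurentPolynomial ℤ) : ℤ := maxDeg f - minDeg f

/-
The states of `C ♯ D` are exactly the pairs of a state of `C` and a state of `D`. For such a pair,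
the generators coming from `C` move only points of `{0, …, 2d}`, and those coming from `D` are the
conjugates by `x ↦ x + 2d` of the generators of `D`, so they move only points of
`{2d, …, 2d + 2e}`. The two blocks share the single point `2d`. So the orbits on
`{0, …, 2(d + e)}` are the orbits of the two halves, except that the two orbits through `2d`
merge into one: `Γ = Γ_C + Γ_D - 1`. Every term, and with it the bracket, is therefore
multiplicative: `⟨C ♯ D⟩ = ⟨C⟩ ⟨D⟩`. Over the domain `ℤ`, the extreme exponents of a product of
nonzero Laurent polynomials add, so the spans add.
-/

theorem LaurentPolynomial.coeff_mul_add_of_forall_le {R : Type*} [Semiring R]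
    {f g : R[T;T⁻¹]} {a b : ℤ}
    (hf : ∀ x ∈ f.coeff.support, x ≤ a) (hg : ∀ y ∈ g.coeff.support, y ≤ b) :
    (f * g).coeff (a + b) = f.coeff a * g.coeff b := by
  classical
  rw [AddMonoidAlgebra.coeff_mul, Finsupp.sum, Finset.sum_eq_single a]
  · rw [Finsupp.sum, Finset.sum_eq_single b, if_pos rfl]
    · exact fun y hy hyb => if_neg fun h => hyb (by omega)
    · intro hb; rw [Finsupp.notMem_support_iff.1 hb, mul_zero, ite_self]
  · refine fun x hx hxa => Finset.sum_eq_zero fun y hy => if_neg fun h => hxa ?_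
    have := hf x hx; have := hg y hy; omega
  · intro ha; simp [Finsupp.notMem_support_iff.1 ha]

section Span

variable {f g : LaurentPolynomial ℤ} {n : ℤ}

theorem le_maxDeg (hn : n ∈ f.coeff.support) : n ≤ maxDeg f := by
  obtain ⟨a, ha⟩ := Finset.max_of_mem hn
  rw [maxDeg, ha, WithBot.unbotD_coe]
  exact WithBot.coe_le_coe.1 (ha ▸ Finset.le_max hn)

theorem maxDeg_mem_support (hf : f ≠ 0) : maxDeg f ∈ f.coeff.support := by
  obtain ⟨a, ha⟩ := Finset.max_of_nonempty
    (Finsupp.support_nonempty_iff.2 (AddMonoidAlgebra.coeff_eq_zero.not.2 hf))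
  rw [maxDeg, ha, WithBot.unbotD_coe]
  exact Finset.mem_of_max ha

theorem maxDeg_eq_of_mem_support (hn : n ∈ f.coeff.support)
    (h : ∀ x ∈ f.coeff.support, x ≤ n) : maxDeg f = n :=
  le_antisymm (h _ (maxDeg_mem_support (by rintro rfl; simp at hn))) (le_maxDeg hn)

theorem minDeg_le (hn : n ∈ f.coeff.support) : minDeg f ≤ n := by
  obtain ⟨a, ha⟩ := Finset.min_of_mem hn
  rw [minDeg, ha, WithTop.untopD_coe]
  exact WithTop.coe_le_coe.1 (ha ▸ Finset.min_le hn)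

theorem minDeg_mem_support (hf : f ≠ 0) : minDeg f ∈ f.coeff.support := by
  obtain ⟨a, ha⟩ := Finset.min_of_nonempty
    (Finsupp.support_nonempty_iff.2 (AddMonoidAlgebra.coeff_eq_zero.not.2 hf))
  rw [minDeg, ha, WithTop.untopD_coe]
  exact Finset.mem_of_min ha

theorem maxDeg_mul (hf : f ≠ 0) (hg : g ≠ 0) : maxDeg (f * g) = maxDeg f + maxDeg g := by
  have hcoeff := coeff_mul_add_of_forall_le (fun _ => le_maxDeg (f := f))
    (fun _ => le_maxDeg (f := g))
  refine maxDeg_eq_of_mem_support ?_ fun x hx => ?_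
  · rw [Finsupp.mem_support_iff, hcoeff]
    exact mul_ne_zero (Finsupp.mem_support_iff.1 (maxDeg_mem_support hf))
      (Finsupp.mem_support_iff.1 (maxDeg_mem_support hg))
  · classical
    obtain ⟨u, hu, v, hv, rfl⟩ :=
      Finset.mem_add.1 (AddMonoidAlgebra.support_coeff_mul_subset f g hx)
    exact add_le_add (le_maxDeg hu) (le_maxDeg hv)

theorem minDeg_eq_neg_maxDeg_invert (hf : f ≠ 0) : minDeg f = -maxDeg (invert f) := by
  rw [maxDeg_eq_of_mem_support (n := -minDeg f), neg_neg]
  · simpa using minDeg_mem_support hf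
  · intro x hx
    rw [Finsupp.mem_support_iff, invert_apply] at hx
    linarith [minDeg_le (Finsupp.mem_support_iff.2 hx)]

theorem minDeg_mul (hf : f ≠ 0) (hg : g ≠ 0) : minDeg (f * g) = minDeg f + minDeg g := by
  have hf' : invert f ≠ 0 := by simpa using hf
  have hg' : invert g ≠ 0 := by simpa using hg
  rw [minDeg_eq_neg_maxDeg_invert (mul_ne_zero hf hg), map_mul, maxDeg_mul hf' hg',
    minDeg_eq_neg_maxDeg_invert hf, minDeg_eq_neg_maxDeg_invert hg]
  ring

theorem spanL_mul (hf : f ≠ 0) (hg : g ≠ 0) : spanL (f * g) = spanL f + spanL g := by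
  rw [spanL, spanL, spanL, maxDeg_mul hf hg, minDeg_mul hf hg]
  ring

end Span

theorem Set.ncard_image_eq_ncard_image_of_eq_iff {α β γ : Type*} {f : α → β} {g : α → γ}
    {S : Set α} (h : ∀ x ∈ S, ∀ y ∈ S, f x = f y ↔ g x = g y) :
    (f '' S).ncard = (g '' S).ncard := by
  have hfst : Set.InjOn Prod.fst ((fun x => (f x, g x)) '' S) := by
    rintro _ ⟨x, hx, rfl⟩ _ ⟨y, hy, rfl⟩ hxy
    simp only [Prod.mk.injEq]
    exact ⟨hxy, (h x hx y hy).1 hxy⟩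
  have hsnd : Set.InjOn Prod.snd ((fun x => (f x, g x)) '' S) := by
    rintro _ ⟨x, hx, rfl⟩ _ ⟨y, hy, rfl⟩ hxy
    simp only [Prod.mk.injEq]
    exact ⟨(h x hx y hy).2 hxy, hxy⟩
  have hf : f '' S = Prod.fst '' ((fun x => (f x, g x)) '' S) := by rw [Set.image_image]
  have hg : g '' S = Prod.snd '' ((fun x => (f x, g x)) '' S) := by rw [Set.image_image]
  rw [hf, hg, hfst.ncard_image, hsnd.ncard_image]

namespace MulAction

open Pointwise

variable {G α : Type*} [Group G] [MulAction G α]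

noncomputable def orbitCount (H : Subgroup G) (S : Set α) : ℕ := ((fun x => orbit H x) '' S).ncard

theorem orbit_subgroup_mono {H K : Subgroup G} (h : H ≤ K) (x : α) : orbit H x ⊆ orbit K x := by
  rintro _ ⟨g, rfl⟩
  exact ⟨⟨g, h g.2⟩, rfl⟩

theorem orbit_subset_of_le_stabilizer {H : Subgroup G} {T : Set α} (hH : H ≤ stabilizer G T)
    {x : α} (hx : x ∈ T) : orbit H x ⊆ T := by
  rintro _ ⟨g, rfl⟩
  rw [← mem_stabilizer_iff.1 (hH g.2)]
  exact Set.smul_mem_smul_set hx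

theorem orbit_subset_of_le_fixingSubgroup_compl {H : Subgroup G} {S : Set α}
    (hH : H ≤ fixingSubgroup G Sᶜ) {x : α} (hx : x ∈ S) : orbit H x ⊆ S :=
  orbit_subset_of_le_stabilizer
    (hH.trans ((fixingSubgroup_le_stabilizer G Sᶜ).trans (stabilizer_compl G α).le)) hx

theorem orbit_map_conj (H : Subgroup G) (g : G) (x : α) :
    orbit (H.map (MulAut.conj g).toMonoidHom) (g • x) = g • orbit H x := by
  ext y
  constructor
  · rintro ⟨⟨_, ⟨h, hh, rfl⟩⟩, rfl⟩
    exact ⟨h • x, ⟨⟨h, hh⟩, rfl⟩, by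
      show g • h • x = (g * h * g⁻¹) • g • x
      simp [mul_smul]⟩
  · rintro ⟨_, ⟨h, rfl⟩, rfl⟩
    exact ⟨⟨_, ⟨h, h.2, rfl⟩⟩, by
      show (g * h * g⁻¹) • g • x = g • (h : G) • x
      simp [mul_smul]⟩

theorem orbitCount_map_conj (H : Subgroup G) (g : G) (S : Set α) :
    orbitCount (H.map (MulAut.conj g).toMonoidHom) (g • S) = orbitCount H S := by
  rw [orbitCount, orbitCount, ← Set.image_smul, Set.image_image]
  simp_rw [orbit_map_conj]
  rw [← Set.image_image (fun T : Set α => g • T), Set.ncard_image_of_injective _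
    (MulAction.injective g : Function.Injective fun T : Set α => g • T)]

section Sup

variable {H₁ H₂ : Subgroup G} {S₁ S₂ : Set α} {m x y : α}

theorem orbit_sup_eq_left (h₁ : H₁ ≤ fixingSubgroup G S₁ᶜ) (h₂ : H₂ ≤ fixingSubgroup G S₂ᶜ)
    (hS : S₁ ∩ S₂ ⊆ {m}) (hx : x ∈ S₁) (hm : m ∉ orbit H₁ x) :
    orbit ↥(H₁ ⊔ H₂) x = orbit H₁ x := by
  refine (orbit_subset_of_le_stabilizer (sup_le ?_ ?_) (mem_orbit_self x)).antisymm
    (orbit_subgroup_mono le_sup_left x)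
  · exact fun g hg => mem_stabilizer_iff.2 (smul_orbit (⟨g, hg⟩ : H₁) x)
  · have hdisj : orbit H₁ x ⊆ S₂ᶜ := fun y hy hy₂ =>
      hm (hS ⟨orbit_subset_of_le_fixingSubgroup_compl h₁ hx hy, hy₂⟩ ▸ hy)
    exact (h₂.trans (fixingSubgroup_antitone G α hdisj)).trans
      (fixingSubgroup_le_stabilizer G _)

theorem orbit_sup_eq_orbit_sup_iff_left (h₁ : H₁ ≤ fixingSubgroup G S₁ᶜ)
    (h₂ : H₂ ≤ fixingSubgroup G S₂ᶜ) (hS : S₁ ∩ S₂ ⊆ {m}) (hx : x ∈ S₁) (hy : y ∈ S₁) :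
    orbit ↥(H₁ ⊔ H₂) x = orbit ↥(H₁ ⊔ H₂) y ↔ orbit H₁ x = orbit H₁ y := by
  refine ⟨fun hxy => ?_, fun hxy => orbit_eq_iff.2
    (orbit_subgroup_mono le_sup_left y (orbit_eq_iff.1 hxy))⟩
  by_cases hmx : m ∈ orbit H₁ x
  · by_cases hmy : m ∈ orbit H₁ y
    · rw [orbit_eq_iff.2 (mem_orbit_symm.1 hmx), orbit_eq_iff.2 (mem_orbit_symm.1 hmy)]
    · rw [orbit_sup_eq_left h₁ h₂ hS hy hmy] at hxy
      exact orbit_eq_iff.2 (hxy ▸ mem_orbit_self x)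
  · rw [orbit_sup_eq_left h₁ h₂ hS hx hmx] at hxy
    exact (orbit_eq_iff.2 (hxy ▸ mem_orbit_self y)).symm

theorem orbitCount_sup_left (h₁ : H₁ ≤ fixingSubgroup G S₁ᶜ) (h₂ : H₂ ≤ fixingSubgroup G S₂ᶜ)
    (hS : S₁ ∩ S₂ ⊆ {m}) : orbitCount (H₁ ⊔ H₂) S₁ = orbitCount H₁ S₁ :=
  Set.ncard_image_eq_ncard_image_of_eq_iff fun _ hx _ hy =>
    orbit_sup_eq_orbit_sup_iff_left h₁ h₂ hS hx hy

theorem orbitCount_sup (h₁ : H₁ ≤ fixingSubgroup G S₁ᶜ) (h₂ : H₂ ≤ fixingSubgroup G S₂ᶜ)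
    (hS : S₁ ∩ S₂ ⊆ {m}) (hm₁ : m ∈ S₁) (hm₂ : m ∈ S₂) (hS₁ : S₁.Finite) (hS₂ : S₂.Finite) :
    orbitCount (H₁ ⊔ H₂) (S₁ ∪ S₂) + 1 = orbitCount H₁ S₁ + orbitCount H₂ S₂ := by
  set O : α → Set α := fun x => orbit ↥(H₁ ⊔ H₂) x
  have hinter : O '' S₁ ∩ O '' S₂ = {O m} := by
    refine Set.Subset.antisymm ?_ (Set.singleton_subset_iff.2 ⟨⟨m, hm₁, rfl⟩, ⟨m, hm₂, rfl⟩⟩)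
    rintro _ ⟨⟨x, hx, rfl⟩, ⟨y, hy, hyx⟩⟩
    suffices hmx : m ∈ O x from orbit_eq_iff.2 (mem_orbit_symm.1 hmx)
    by_contra hmx
    have hx' : O x = orbit H₁ x :=
      orbit_sup_eq_left h₁ h₂ hS hx fun h => hmx (orbit_subgroup_mono le_sup_left x h)
    have hyx : y ∈ O x := hyx ▸ mem_orbit_self y
    have hym : y = m := hS ⟨orbit_subset_of_le_fixingSubgroup_compl h₁ hx (hx' ▸ hyx), hy⟩
    exact hmx (hym ▸ hyx)
  have hcount₂ : orbitCount (H₁ ⊔ H₂) S₂ = orbitCount H₂ S₂ := by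
    rw [sup_comm]
    exact orbitCount_sup_left h₂ h₁ (Set.inter_comm S₁ S₂ ▸ hS)
  have := Set.ncard_union_add_ncard_inter (O '' S₁) (O '' S₂) (hS₁.image O) (hS₂.image O)
  rw [hinter, Set.ncard_singleton, ← Set.image_union] at this
  rw [orbitCount, this, ← orbitCount_sup_left h₁ h₂ hS, ← hcount₂]
  rfl

end Sup

end MulAction

theorem IsOLCD.mem_Ioc {d : ℕ} {C : Finset (ℤ × ℤ)} (hC : IsOLCD d C) {c : ℤ × ℤ} (hc : c ∈ C) :
    c.1 ∈ Set.Ioc 0 (2 * (d : ℤ)) ∧ c.2 ∈ Set.Ioc 0 (2 * (d : ℤ)) := by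
  have h₁ : c.1 ∈ C.image Prod.fst ∪ C.image Prod.snd := mem_union_left _ (mem_image_of_mem _ hc)
  have h₂ : c.2 ∈ C.image Prod.fst ∪ C.image Prod.snd := mem_union_right _ (mem_image_of_mem _ hc)
  rw [hC.2, Finset.mem_Icc] at h₁ h₂
  exact ⟨⟨by omega, h₁.2⟩, ⟨by omega, h₂.2⟩⟩

theorem Rset_subset_fixingSubgroup {lbl : Bool} {c : ℤ × ℤ} {lo hi : ℤ}
    (h₁ : c.1 ∈ Set.Ioc lo hi) (h₂ : c.2 ∈ Set.Ioc lo hi) :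
    Rset lbl c ⊆ fixingSubgroup (Perm ℤ) (Set.Icc lo hi)ᶜ := by
  obtain ⟨h₁, h₁'⟩ := h₁
  obtain ⟨h₂, h₂'⟩ := h₂
  have hswap : ∀ u ∈ Set.Icc lo hi, ∀ v ∈ Set.Icc lo hi,
      swap u v ∈ fixingSubgroup (Perm ℤ) (Set.Icc lo hi)ᶜ := fun u hu v hv =>
    (mem_fixingSubgroup_iff _).2 fun x hx =>
      swap_apply_of_ne_of_ne (by rintro rfl; exact hx hu) (by rintro rfl; exact hx hv)
  unfold Rset
  split_ifs <;> rintro g (rfl | rfl) <;> exact hswap _ ⟨by omega, by omega⟩ _ ⟨by omega, by omega⟩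

theorem closure_Rset_le_fixingSubgroup {X : Type*} {lbl : X → Bool} {χ : X → ℤ × ℤ} {lo hi : ℤ}
    (hχ : ∀ x, (χ x).1 ∈ Set.Ioc lo hi ∧ (χ x).2 ∈ Set.Ioc lo hi) :
    Subgroup.closure (⋃ x, Rset (lbl x) (χ x)) ≤ fixingSubgroup (Perm ℤ) (Set.Icc lo hi)ᶜ :=
  (Subgroup.closure_le _).2
    (Set.iUnion_subset fun x => Rset_subset_fixingSubgroup (hχ x).1 (hχ x).2)

theorem one_le_Gamma (d : ℕ) (C : Finset (ℤ × ℤ)) (s : {c // c ∈ C} → Bool) : 1 ≤ Gamma d C s :=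
  (Set.ncard_pos ((Set.finite_Icc _ _).image _)).2 ⟨_, 0, ⟨le_rfl, by positivity⟩, rfl⟩

def chordShift (t : ℤ) : ℤ × ℤ ≃ ℤ × ℤ := (Equiv.addRight t).prodCongr (Equiv.addRight t)

theorem Rset_chordShift (lbl : Bool) (c : ℤ × ℤ) (t : ℤ) :
    Rset lbl (chordShift t c) = MulAut.conj (Equiv.addRight t) '' Rset lbl c := by
  have hswap (u v : ℤ) : swap (u + t) (v + t) = MulAut.conj (Equiv.addRight t) (swap u v) :=
    swap_apply_apply (Equiv.addRight t) u v
  have hsub (u : ℤ) : u + t - 1 = u - 1 + t := by ring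
  simp only [Rset, chordShift, prodCongr_apply, Prod.map, coe_addRight, add_lt_add_iff_right]
  split_ifs <;> simp [Set.image_insert_eq, hsub, hswap]

section Stacking

variable {C D : Finset (ℤ × ℤ)} {t : ℤ}

def stackIndex (h : Disjoint C (D.image (chordShift t))) :
    {c // c ∈ C} ⊕ {c // c ∈ D} ≃ {c // c ∈ C ∪ D.image (chordShift t)} :=
  (Equiv.sumCongr (Equiv.refl _) ((chordShift t).subtypeEquiv fun _ =>
    (chordShift t).injective.mem_finset_image.symm)).trans (Equiv.Finset.union _ _ h)

def stackState (h : Disjoint C (D.image (chordShift t))) :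
    (({c // c ∈ C} → Bool) × ({c // c ∈ D} → Bool)) ≃
      ({c // c ∈ C ∪ D.image (chordShift t)} → Bool) :=
  (Equiv.sumArrowEquivProdArrow _ _ Bool).symm.trans ((stackIndex h).arrowCongr (Equiv.refl Bool))

variable (h : Disjoint C (D.image (chordShift t)))
  (s : ({c // c ∈ C} → Bool) × ({c // c ∈ D} → Bool))

theorem stackState_apply_stackIndex (x : {c // c ∈ C} ⊕ {c // c ∈ D}) :
    stackState h s (stackIndex h x) = Sum.elim s.1 s.2 x := by
  cases x <;> simp [stackState] <;> rfl

theorem card_filter_stackState (b : Bool) :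
    #{u | stackState h s u = b} = #{c | s.1 c = b} + #{q | s.2 q = b} := by
  simp only [Finset.card_filter]
  rw [← (stackIndex h).sum_comp, Fintype.sum_sum_type]
  simp only [stackState_apply_stackIndex, Sum.elim_inl, Sum.elim_inr]

theorem stateGroup_stackState :
    stateGroup (C ∪ D.image (chordShift t)) (stackState h s) =
      stateGroup C s.1 ⊔ (stateGroup D s.2).map (MulAut.conj (Equiv.addRight t)).toMonoidHom := by
  rw [stateGroup, stateGroup, stateGroup, MonoidHom.map_closure, ← Subgroup.closure_union,
    ← (stackIndex h).surjective.iUnion_comp, Set.iUnion_sum, Set.image_iUnion]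
  simp only [stackState_apply_stackIndex, Sum.elim_inl, Sum.elim_inr]
  congr 3
  exact funext fun q => Rset_chordShift _ _ _

end Stacking

section Bracket

open MulAction Pointwise

variable {d e : ℕ} {C D : Finset (ℤ × ℤ)}

theorem IsOLCD.disjoint_image_chordShift (hC : IsOLCD d C) (hD : IsOLCD e D) :
    Disjoint C (D.image (chordShift (2 * d))) := by
  refine Finset.disjoint_left.2 fun c hc hc' => ?_
  obtain ⟨q, hq, rfl⟩ := Finset.mem_image.1 hc'
  have h₁ := (hC.mem_Ioc hc).1.2
  have h₂ : 0 < q.1 := (hD.mem_Ioc hq).1.1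
  simp only [chordShift, prodCongr_apply, Prod.map, coe_addRight] at h₁
  linarith

theorem Gamma_stackState (hC : IsOLCD d C) (hD : IsOLCD e D)
    (s : ({c // c ∈ C} → Bool) × ({c // c ∈ D} → Bool)) :
    Gamma (d + e) (C ∪ D.image (chordShift (2 * d)))
        (stackState (hC.disjoint_image_chordShift hD) s) + 1 =
      Gamma d C s.1 + Gamma e D s.2 := by
  set τ := Equiv.addRight (2 * (d : ℤ))
  have hτ : τ • Set.Icc 0 (2 * (e : ℤ)) = Set.Icc (2 * (d : ℤ)) (2 * d + 2 * e) := by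
    rw [← Set.image_smul, show (fun x => τ • x) = (· + 2 * (d : ℤ)) from rfl,
      Set.image_add_const_Icc, zero_add, add_comm]
  have h₁ : stateGroup C s.1 ≤ fixingSubgroup (Perm ℤ) (Set.Icc 0 (2 * (d : ℤ)))ᶜ :=
    closure_Rset_le_fixingSubgroup fun c => hC.mem_Ioc c.2
  have h₂ : (stateGroup D s.2).map (MulAut.conj τ).toMonoidHom ≤
      fixingSubgroup (Perm ℤ) (τ • Set.Icc 0 (2 * (e : ℤ)))ᶜ := by
    rw [← Set.smul_set_compl, ← SubMulAction.fixingSubgroup_map_conj_eq rfl]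
    exact Subgroup.map_mono (closure_Rset_le_fixingSubgroup fun q => hD.mem_Ioc q.2)
  have hS : Set.Icc 0 (2 * (d : ℤ)) ∩ τ • Set.Icc 0 (2 * (e : ℤ)) ⊆ {2 * (d : ℤ)} := by
    rw [hτ]
    rintro x ⟨⟨-, hx⟩, ⟨hx', -⟩⟩
    exact le_antisymm hx hx'
  have hm₂ : 2 * (d : ℤ) ∈ τ • Set.Icc 0 (2 * (e : ℤ)) := by
    rw [hτ]
    exact Set.left_mem_Icc.2 (by omega)
  have hcount := orbitCount_sup h₁ h₂ hS (Set.right_mem_Icc.2 (by omega)) hm₂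
    (Set.finite_Icc _ _) ((Set.finite_Icc _ _).smul_set)
  rw [orbitCount_map_conj, ← stateGroup_stackState (hC.disjoint_image_chordShift hD), hτ,
    Set.Icc_union_Icc_eq_Icc (by omega) (by omega)] at hcount
  rw [← mul_add, ← Nat.cast_add] at hcount
  exact hcount

theorem bracketTerm_stackState (hC : IsOLCD d C) (hD : IsOLCD e D)
    (s : ({c // c ∈ C} → Bool) × ({c // c ∈ D} → Bool)) :
    bracketTerm (d + e) (C ∪ D.image (chordShift (2 * d)))
        (stackState (hC.disjoint_image_chordShift hD) s) =
      bracketTerm d C s.1 * bracketTerm e D s.2 := by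
  have hΓ := Gamma_stackState hC hD s
  have hexp : Gamma (d + e) (C ∪ D.image (chordShift (2 * d)))
      (stackState (hC.disjoint_image_chordShift hD) s) - 1 =
        (Gamma d C s.1 - 1) + (Gamma e D s.2 - 1) := by
    have := one_le_Gamma d C s.1
    have := one_le_Gamma e D s.2
    omega
  rw [bracketTerm, bracketTerm, bracketTerm, card_filter_stackState, card_filter_stackState, hexp,
    pow_add, Nat.cast_add, Nat.cast_add, add_sub_add_comm, T_add]
  ring

theorem bracket_stack (hC : IsOLCD d C) (hD : IsOLCD e D) :
    bracket (d + e) (C ∪ D.image (chordShift (2 * d))) = bracket d C * bracket e D := by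
  rw [bracket, bracket, bracket, ← (stackState (hC.disjoint_image_chordShift hD)).sum_comp,
    Fintype.sum_prod_type, Finset.sum_mul_sum]
  exact Finset.sum_congr rfl fun s₁ _ => Finset.sum_congr rfl fun s₂ _ =>
    bracketTerm_stackState hC hD (s₁, s₂)

end Bracket

/-- `span ⟨C ♯ D⟩ = span ⟨C⟩ + span ⟨D⟩` when `⟨C⟩ ≠ 0` and `⟨D⟩ ≠ 0`. -/
theorem span_bracket_stacking (d e : ℕ) (C D : Finset (ℤ × ℤ))
    (hC : IsOLCD d C) (hD : IsOLCD e D)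
    (hC0 : bracket d C ≠ 0) (hD0 : bracket e D ≠ 0) :
    spanL (bracket (d + e)
        (C ∪ D.image fun p => (p.1 + 2 * (d : ℤ), p.2 + 2 * (d : ℤ)))) =
      spanL (bracket d C) + spanL (bracket e D) := by
  rw [← spanL_mul hC0 hD0, ← bracket_stack hC hD]
  rfl
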